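/- Let p > 2, let i ≥ 1 be an integer, and let γ ∈ (0,1/2). Let A and B be bounded operators. Then: (1) if ‖A‖_{p,iγ} < ∞ and ‖B‖_{p,iγ} < ∞ then ‖AB‖_{p−1,(i+1)γ} ≤ C_p·‖A‖_{p,iγ}·‖B‖_{p,iγ}; (2) if ‖A‖_{p,(i−1)γ} < ∞ and ‖B‖_{p−1,iγ} < ∞ then ‖AB‖_{p−1,iγ} ≤ C_p·‖A‖_{p,(i−1)γ}·‖B‖_{p−1,iγ}; (3) if ‖A‖_{p+1,(i−1)γ} < ∞ and ‖B‖_{p−1,(i+1)γ} < ∞ then ‖AB‖_{p−1,(i+1)γ} ≤ 2C_p·‖A‖_{p+1,(i−1)γ}·‖B‖_{p−1,(i+1)γ}. The same three bounds hold with the order of the factors A and B reversed. Here C_p := 2^{p+1}(1 + 2ζ(p−1)). -/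

import Mathlib

noncomputable section

open ContinuousLinearMap

variable {𝓗 : Type*} [NormedAddCommGroup 𝓗] [InnerProductSpace ℂ 𝓗] [CompleteSpace 𝓗]

/-- `⟨x⟩ := max {1, |x|}`. -/
def jap (x : ℝ) : ℝ := max 1 |x|

/-- `(Pₙ)_{n≥1}` is a family of mutually orthogonal nonzero orthogonal projections
with `Σₙ Pₙ = I` in the strong sense. -/
def ProjFamily (P : ℕ+ → 𝓗 →L[ℂ] 𝓗) : Prop :=
  (∀ n, IsSelfAdjoint (P n)) ∧ (∀ n, (P n).comp (P n) = P n) ∧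
  (∀ m n, m ≠ n → (P m).comp (P n) = 0) ∧ (∀ n, P n ≠ 0) ∧
  (∀ ψ : 𝓗, HasSum (fun n => P n ψ) ψ)

/-- The quantity `⟨m-n⟩^p · max{m,n}^(2δ) · ‖Pₘ A Pₙ‖`; the norm `‖A‖_{p,δ}` is its
supremum over `m, n ≥ 1`. -/
def wnorm (P : ℕ+ → 𝓗 →L[ℂ] 𝓗) (p δ : ℝ) (A : 𝓗 →L[ℂ] 𝓗) (m n : ℕ+) : ℝ :=
  jap (((m : ℕ) : ℝ) - ((n : ℕ) : ℝ)) ^ p * (((max m n : ℕ+) : ℕ) : ℝ) ^ (2 * δ) *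
    ‖(P m).comp (A.comp (P n))‖

/-- `A` is diagonal with respect to the family `P`. -/
def IsDiag (P : ℕ+ → 𝓗 →L[ℂ] 𝓗) (A : 𝓗 →L[ℂ] 𝓗) : Prop :=
  ∀ m n, m ≠ n → (P m).comp (A.comp (P n)) = 0

/-- `Dom(H) = {ψ : Σₙ Eₙ²‖Pₙψ‖² < ∞}`. -/
def HDom (P : ℕ+ → 𝓗 →L[ℂ] 𝓗) (E : ℕ+ → ℝ) : Set 𝓗 :=
  {ψ | Summable fun n => (E n) ^ 2 * ‖P n ψ‖ ^ 2}

/-- The form domain `Q_H = {ψ : Σₙ Eₙ‖Pₙψ‖² < ∞}`. -/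
def QDom (P : ℕ+ → 𝓗 →L[ℂ] 𝓗) (E : ℕ+ → ℝ) : Set 𝓗 :=
  {ψ | Summable fun n => E n * ‖P n ψ‖ ^ 2}

/-- `h = Hψ`, i.e. `h = Σₙ Eₙ Pₙ ψ`. -/
def IsHSum (P : ℕ+ → 𝓗 →L[ℂ] 𝓗) (E : ℕ+ → ℝ) (ψ h : 𝓗) : Prop :=
  HasSum (fun n => (E n : ℂ) • P n ψ) h

/-- `U` is unitary. -/
def IsUnitaryOp (U : 𝓗 →L[ℂ] 𝓗) : Prop := U * star U = 1 ∧ star U * U = 1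

/-- A family of bounded operators which is `C¹` in the strong sense. -/
def StrongC1 (V : ℝ → 𝓗 →L[ℂ] 𝓗) : Prop := ∀ ψ : 𝓗, ContDiff ℝ 1 fun t => V t ψ

/-- `U(t,s)` is a propagator for `H + V(t)`. -/
def IsPropagator (P : ℕ+ → 𝓗 →L[ℂ] 𝓗) (E : ℕ+ → ℝ) (V : ℝ → 𝓗 →L[ℂ] 𝓗)
    (U : ℝ → ℝ → 𝓗 →L[ℂ] 𝓗) : Prop :=
  (∀ t s, IsUnitaryOp (U t s)) ∧
  (∀ ψ : 𝓗, Continuous fun ts : ℝ × ℝ => U ts.1 ts.2 ψ) ∧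
  (∀ t, U t t = 1) ∧
  (∀ t s r, (U t s).comp (U s r) = U t r) ∧
  (∀ t s, ⇑(U t s) '' HDom P E = HDom P E) ∧
  (∀ s : ℝ, ∀ ψ ∈ HDom P E, ∀ t : ℝ, ∃ d : 𝓗,
    HasDerivAt (fun τ => U τ s ψ) d t ∧
    ∀ h : 𝓗, IsHSum P E (U t s ψ) h → Complex.I • d = h + V t (U t s ψ))

/-- The Riemann zeta function `ζ(s) = Σ_{n≥1} n^{-s}` (for real `s > 1`). -/
def rzeta (s : ℝ) : ℝ := ∑' n : ℕ+, (((n : ℕ) : ℝ) ^ s)⁻¹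

/-- The constant `C_p = 2^(p+1) (1 + 2 ζ(p-1))`. -/
def Cconst (p : ℝ) : ℝ := 2 ^ (p + 1) * (1 + 2 * rzeta (p - 1))

/-!
Since `∑ₗ Pₗ = I`, `(AB)ₘₙ = ∑ₗ Aₘₗ Bₗₙ`, so `‖(AB)ₘₙ‖ ≤ ∑ₗ ‖Aₘₗ‖ ‖Bₗₙ‖`. Write `x = ⟨m-l⟩`,
`y = ⟨l-n⟩`. From `⟨m-n⟩ ≤ 2 max(x, y)` one gets `⟨m-n⟩^q ≤ 2^q (x^{-q} + y^{-q}) x^q y^q`, and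
`∑ₗ ⟨m-l⟩^{-q} ≤ ∑_{j ∈ ℤ} ⟨j⟩^{-q} = 1 + 2ζ(q)`, which produces the constant when `q = p - 1`.
The growth weight `max(m,n)` is bounded by one of `max(m,l)`, `max(l,n)`, and also by both
`2 max(l,n) x` and `2 max(m,l) y`; so the part of the exponent `2δ` not covered by the factor
`A` (resp. `B`) can be paid for by the spare decay `x^{pA-q}` (resp. `y^{pB-q}`). Since `2γ < 1`
the exponents of all three estimates allow this, and exchanging the factors swaps the two sides.
-/

lemma one_le_jap (x : ℝ) : 1 ≤ jap x := le_max_left _ _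

lemma abs_le_jap (x : ℝ) : |x| ≤ jap x := le_max_right _ _

lemma jap_pos (x : ℝ) : 0 < jap x := one_pos.trans_le (one_le_jap x)

lemma jap_sub_comm (a b : ℝ) : jap (a - b) = jap (b - a) := by
  rw [jap, jap, abs_sub_comm]

lemma jap_neg (x : ℝ) : jap (-x) = jap x := by rw [jap, jap, abs_neg]

lemma jap_of_one_le_abs {x : ℝ} (hx : 1 ≤ |x|) : jap x = |x| := max_eq_right hx

lemma jap_sub_le (a b c : ℝ) : jap (a - c) ≤ 2 * max (jap (a - b)) (jap (b - c)) := by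
  have hx := le_max_left (jap (a - b)) (jap (b - c))
  have hy := le_max_right (jap (a - b)) (jap (b - c))
  refine max_le (by linarith [one_le_jap (a - b)]) ?_
  calc |a - c| ≤ |a - b| + |b - c| := abs_sub_le a b c
    _ ≤ jap (a - b) + jap (b - c) := add_le_add (abs_le_jap _) (abs_le_jap _)
    _ ≤ 2 * max (jap (a - b)) (jap (b - c)) := by linarith

lemma le_two_mul_mul_jap_sub {a b : ℝ} (hb : 1 ≤ b) : a ≤ 2 * b * jap (a - b) := by
  have h1 := one_le_jap (a - b)
  have h2 := (le_abs_self (a - b)).trans (abs_le_jap (a - b))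
  nlinarith

lemma max_le_two_mul_max_mul_jap {a b c : ℝ} (hb : 1 ≤ b) :
    max a c ≤ 2 * max b c * jap (a - b) := by
  have h1 := one_le_jap (a - b)
  have h2 := le_two_mul_mul_jap_sub (a := a) hb
  have h3 := le_max_left b c
  have h4 := le_max_right b c
  refine max_le (h2.trans ?_) ?_ <;> nlinarith

lemma summable_jap_rpow_inv {q : ℝ} (hq : 1 < q) :
    Summable fun j : ℤ => (jap j ^ q)⁻¹ := by
  refine (Real.summable_abs_int_rpow hq).congr_cofinite ?_
  filter_upwards [Filter.eventually_cofinite_ne 0] with j hj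
  rw [jap_of_one_le_abs (by exact_mod_cast Int.one_le_abs hj), Real.rpow_neg (abs_nonneg _)]

lemma tsum_jap_rpow_inv {q : ℝ} (hq : 1 < q) :
    ∑' j : ℤ, (jap j ^ q)⁻¹ = 1 + 2 * rzeta q := by
  have hn (n : ℕ+) : max 1 ((n : ℕ) : ℝ) = n := max_eq_right (Nat.one_le_cast.mpr n.pos)
  rw [tsum_int_eq_zero_add_two_mul_tsum_pnat (fun j => by simp [jap_neg])
    (summable_jap_rpow_inv hq)]
  simp [hn, jap, rzeta, nsmul_eq_mul]

lemma PNat.natCast_sub_injective (m : ℕ+) :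
    Function.Injective fun l : ℕ+ => ((m : ℕ) : ℤ) - ((l : ℕ) : ℤ) :=
  sub_right_injective.comp (Nat.cast_injective.comp PNat.coe_injective)

lemma summable_jap_sub_rpow_inv {q : ℝ} (hq : 1 < q) (m : ℕ+) :
    Summable fun l : ℕ+ => (jap (((m : ℕ) : ℝ) - ((l : ℕ) : ℝ)) ^ q)⁻¹ := by
  simpa [Function.comp_def] using
    (summable_jap_rpow_inv hq).comp_injective (PNat.natCast_sub_injective m)

lemma tsum_jap_sub_rpow_inv_le {q : ℝ} (hq : 1 < q) (m : ℕ+) :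
    ∑' l : ℕ+, (jap (((m : ℕ) : ℝ) - ((l : ℕ) : ℝ)) ^ q)⁻¹ ≤ 1 + 2 * rzeta q := by
  rw [← tsum_jap_rpow_inv hq]
  simpa [Function.comp_def] using tsum_comp_le_tsum_of_inj (summable_jap_rpow_inv hq)
    (fun j => inv_nonneg.2 (Real.rpow_nonneg (jap_pos _).le _)) (PNat.natCast_sub_injective m)

lemma rpow_le_two_rpow_mul_inv_add {x y z q : ℝ} (hx : 1 ≤ x) (hy : 1 ≤ y) (hz0 : 0 ≤ z)
    (hz : z ≤ 2 * max x y) (hq : 0 ≤ q) :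
    z ^ q ≤ 2 ^ q * ((x ^ q)⁻¹ + (y ^ q)⁻¹) * (x ^ q * y ^ q) := by
  have hxq : 0 < x ^ q := Real.rpow_pos_of_pos (by linarith) q
  have hyq : 0 < y ^ q := Real.rpow_pos_of_pos (by linarith) q
  have hmax : max x y ^ q ≤ y ^ q + x ^ q := by
    rcases le_total x y with h | h
    · rw [max_eq_right h]; linarith
    · rw [max_eq_left h]; linarith
  calc z ^ q ≤ (2 * max x y) ^ q := Real.rpow_le_rpow hz0 hz hq
    _ = 2 ^ q * max x y ^ q := Real.mul_rpow zero_le_two (by positivity)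
    _ ≤ 2 ^ q * (y ^ q + x ^ q) := by gcongr
    _ = 2 ^ q * ((x ^ q)⁻¹ + (y ^ q)⁻¹) * (x ^ q * y ^ q) := by field_simp

lemma rpow_le_of_le_left {M u v x y δ δA δB sA sB s : ℝ} (hM : 1 ≤ M) (hv : 1 ≤ v)
    (hx : 1 ≤ x) (hy : 1 ≤ y) (hMu : M ≤ u) (hMvx : M ≤ 2 * v * x) (hδA : 0 ≤ δA)
    (hδAδ : δA ≤ δ) (hδ : δ ≤ δA + δB) (hsA : 2 * (δ - δA) ≤ sA) (hs : 2 * (δ - δA) ≤ s)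
    (hsB : 0 ≤ sB) :
    M ^ (2 * δ) ≤ 2 ^ s * (u ^ (2 * δA) * v ^ (2 * δB) * (x ^ sA * y ^ sB)) := by
  have hM0 : 0 < M := by linarith
  have hd : 0 ≤ 2 * (δ - δA) := by linarith
  have hsplit : M ^ (2 * δ) = M ^ (2 * δA) * M ^ (2 * (δ - δA)) := by
    rw [← Real.rpow_add hM0]; ring_nf
  have hgap : M ^ (2 * (δ - δA)) ≤ 2 ^ s * v ^ (2 * δB) * x ^ sA :=
    calc M ^ (2 * (δ - δA)) ≤ (2 * v * x) ^ (2 * (δ - δA)) :=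
          Real.rpow_le_rpow hM0.le hMvx hd
      _ = 2 ^ (2 * (δ - δA)) * v ^ (2 * (δ - δA)) * x ^ (2 * (δ - δA)) := by
          rw [Real.mul_rpow (by positivity) (by positivity),
            Real.mul_rpow zero_le_two (by positivity)]
      _ ≤ 2 ^ s * v ^ (2 * δB) * x ^ sA := by
          gcongr
          · exact one_le_two
          · linarith
  have hy1 : 1 ≤ y ^ sB := Real.one_le_rpow hy hsB
  have hu0 : 0 ≤ u ^ (2 * δA) := Real.rpow_nonneg (by linarith) _
  have hv0 : 0 ≤ v ^ (2 * δB) := Real.rpow_nonneg (by linarith) _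
  have hx0 : 0 ≤ x ^ sA := Real.rpow_nonneg (by linarith) _
  calc M ^ (2 * δ) = M ^ (2 * δA) * M ^ (2 * (δ - δA)) := hsplit
    _ ≤ u ^ (2 * δA) * (2 ^ s * v ^ (2 * δB) * x ^ sA) := by gcongr
    _ ≤ u ^ (2 * δA) * (2 ^ s * v ^ (2 * δB) * x ^ sA) * y ^ sB :=
        le_mul_of_one_le_right (by positivity) hy1
    _ = 2 ^ s * (u ^ (2 * δA) * v ^ (2 * δB) * (x ^ sA * y ^ sB)) := by ring

lemma PNat.cast_max_real (m n : ℕ+) :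
    (((max m n : ℕ+) : ℕ) : ℝ) = max ((m : ℕ) : ℝ) ((n : ℕ) : ℝ) :=
  Monotone.map_max (f := fun k : ℕ+ => ((k : ℕ) : ℝ)) fun _ _ h => by simpa using h

def weight (p δ : ℝ) (m n : ℕ+) : ℝ :=
  jap (((m : ℕ) : ℝ) - ((n : ℕ) : ℝ)) ^ p * (((max m n : ℕ+) : ℕ) : ℝ) ^ (2 * δ)

lemma weight_pos (p δ : ℝ) (m n : ℕ+) : 0 < weight p δ m n :=
  mul_pos (Real.rpow_pos_of_pos (jap_pos _) p)
    (Real.rpow_pos_of_pos (Nat.cast_pos.2 (max m n).pos) _)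

omit [CompleteSpace 𝓗] in
lemma wnorm_eq_weight_mul (P : ℕ+ → 𝓗 →L[ℂ] 𝓗) (p δ : ℝ) (A : 𝓗 →L[ℂ] 𝓗) (m n : ℕ+) :
    wnorm P p δ A m n = weight p δ m n * ‖(P m).comp (A.comp (P n))‖ := rfl

omit [CompleteSpace 𝓗] in
lemma wnorm_nonneg (P : ℕ+ → 𝓗 →L[ℂ] 𝓗) (p δ : ℝ) (A : 𝓗 →L[ℂ] 𝓗) (m n : ℕ+) :
    0 ≤ wnorm P p δ A m n :=
  mul_nonneg (weight_pos p δ m n).le (norm_nonneg _)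

lemma ProjFamily.norm_comp_le_tsum {P : ℕ+ → 𝓗 →L[ℂ] 𝓗} (hP : ProjFamily P)
    (A B : 𝓗 →L[ℂ] 𝓗) (m n : ℕ+)
    (hs : Summable fun l => ‖(P m).comp (A.comp (P l))‖ * ‖(P l).comp (B.comp (P n))‖) :
    ‖(P m).comp ((A.comp B).comp (P n))‖ ≤
      ∑' l, ‖(P m).comp (A.comp (P l))‖ * ‖(P l).comp (B.comp (P n))‖ := by
  refine opNorm_le_bound _ (tsum_nonneg fun l => by positivity) fun ψ => ?_
  have hterm (l : ℕ+) : (P m).comp A (P l (B (P n ψ))) =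
      (P m).comp (A.comp (P l)) ((P l).comp (B.comp (P n)) ψ) := by
    simp only [coe_comp, Function.comp_apply, ← comp_apply (P l) (P l), hP.2.1 l]
  have hnorm (l : ℕ+) : ‖(P m).comp A (P l (B (P n ψ)))‖ ≤
      ‖(P m).comp (A.comp (P l))‖ * ‖(P l).comp (B.comp (P n))‖ * ‖ψ‖ := by
    rw [hterm, mul_assoc]
    exact (le_opNorm _ _).trans (by gcongr; exact le_opNorm _ _)
  have hsum : HasSum (fun l => (P m).comp A (P l (B (P n ψ)))) ((P m).comp A (B (P n ψ))) :=
    ((P m).comp A).hasSum (hP.2.2.2.2 _)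
  calc ‖(P m).comp ((A.comp B).comp (P n)) ψ‖ = ‖∑' l, (P m).comp A (P l (B (P n ψ)))‖ := by
        rw [hsum.tsum_eq]; rfl
    _ ≤ ∑' l, ‖(P m).comp (A.comp (P l))‖ * ‖(P l).comp (B.comp (P n))‖ * ‖ψ‖ :=
        tsum_of_norm_bounded (hs.mul_right _).hasSum hnorm
    _ = (∑' l, ‖(P m).comp (A.comp (P l))‖ * ‖(P l).comp (B.comp (P n))‖) * ‖ψ‖ :=
        tsum_mul_right

/-- Exponents for which `‖AB‖_{q,δ} ≤ 2^{s+q+1} (1 + 2ζ(q)) ‖A‖_{pA,δA} ‖B‖_{pB,δB}`. -/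
structure ProductExponents (q δ pA δA pB δB s : ℝ) : Prop where
  left_nonneg : 0 ≤ δA
  right_nonneg : 0 ≤ δB
  left_le : δA ≤ δ
  right_le : δB ≤ δ
  le_add : δ ≤ δA + δB
  left_gap : 2 * (δ - δA) ≤ pA - q
  right_gap : 2 * (δ - δB) ≤ pB - q
  left_le_const : 2 * (δ - δA) ≤ s
  right_le_const : 2 * (δ - δB) ≤ s

namespace ProductExponents

variable {q δ pA δA pB δB s : ℝ}

lemma swap (h : ProductExponents q δ pA δA pB δB s) : ProductExponents q δ pB δB pA δA s :=
  ⟨h.right_nonneg, h.left_nonneg, h.right_le, h.left_le, by linarith [h.le_add], h.right_gap,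
    h.left_gap, h.right_le_const, h.left_le_const⟩

lemma rpow_le (h : ProductExponents q δ pA δA pB δB s) {M u v x y : ℝ} (hM : 1 ≤ M)
    (hu : 1 ≤ u) (hv : 1 ≤ v) (hx : 1 ≤ x) (hy : 1 ≤ y) (hMuv : M ≤ max u v)
    (hMvx : M ≤ 2 * v * x) (hMuy : M ≤ 2 * u * y) :
    M ^ (2 * δ) ≤ 2 ^ s * (u ^ (2 * δA) * v ^ (2 * δB) * (x ^ (pA - q) * y ^ (pB - q))) := by
  rcases le_max_iff.1 hMuv with hMu | hMv
  · exact rpow_le_of_le_left hM hv hx hy hMu hMvx h.left_nonneg h.left_le h.le_add h.left_gap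
      h.left_le_const (by linarith [h.right_le, h.right_gap])
  · have h' := h.swap
    calc M ^ (2 * δ)
        ≤ 2 ^ s * (v ^ (2 * δB) * u ^ (2 * δA) * (y ^ (pB - q) * x ^ (pA - q))) :=
          rpow_le_of_le_left hM hu hy hx hMv hMuy h'.left_nonneg h'.left_le h'.le_add
            h'.left_gap h'.left_le_const (by linarith [h.left_le, h.left_gap])
      _ = 2 ^ s * (u ^ (2 * δA) * v ^ (2 * δB) * (x ^ (pA - q) * y ^ (pB - q))) := by ring

lemma weight_le (h : ProductExponents q δ pA δA pB δB s) (hq : 0 ≤ q)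
    (m n l : ℕ+) :
    weight q δ m n ≤ 2 ^ (s + q) *
      ((jap (((m : ℕ) : ℝ) - ((l : ℕ) : ℝ)) ^ q)⁻¹ + (jap (((l : ℕ) : ℝ) - ((n : ℕ) : ℝ)) ^ q)⁻¹) *
      (weight pA δA m l * weight pB δB l n) := by
  have hcast (k : ℕ+) : (1 : ℝ) ≤ (k : ℕ) := Nat.one_le_cast.2 k.pos
  simp only [weight, PNat.cast_max_real]
  set a : ℝ := ((m : ℕ) : ℝ)
  set b : ℝ := ((l : ℕ) : ℝ)
  set c : ℝ := ((n : ℕ) : ℝ)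
  have ha := hcast m
  have hb := hcast l
  set x := jap (a - b)
  set y := jap (b - c)
  have hx := one_le_jap (a - b)
  have hy := one_le_jap (b - c)
  have hdecay := rpow_le_two_rpow_mul_inv_add hx hy (jap_pos (a - c)).le (jap_sub_le a b c) hq
  have hMvx : max a c ≤ 2 * max b c * x := max_le_two_mul_max_mul_jap hb
  have hMuy : max a c ≤ 2 * max a b * y := by
    have := max_le_two_mul_max_mul_jap (a := c) (c := a) hb
    rwa [max_comm c a, max_comm b a, jap_sub_comm] at this
  have hW := h.rpow_le (ha.trans (le_max_left a c)) (ha.trans (le_max_left a b))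
    (hb.trans (le_max_left b c)) hx hy (max_le_max (le_max_left a b) (le_max_right b c)) hMvx hMuy
  calc jap (a - c) ^ q * max a c ^ (2 * δ)
      ≤ 2 ^ q * ((x ^ q)⁻¹ + (y ^ q)⁻¹) * (x ^ q * y ^ q) * (2 ^ s *
          (max a b ^ (2 * δA) * max b c ^ (2 * δB) * (x ^ (pA - q) * y ^ (pB - q)))) :=
        mul_le_mul hdecay hW (by positivity) (by positivity)
    _ = 2 ^ (s + q) * ((x ^ q)⁻¹ + (y ^ q)⁻¹) *
          (x ^ pA * max a b ^ (2 * δA) * (y ^ pB * max b c ^ (2 * δB))) := by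
        have hxq : 0 < x ^ q := Real.rpow_pos_of_pos (by linarith) q
        have hyq : 0 < y ^ q := Real.rpow_pos_of_pos (by linarith) q
        rw [Real.rpow_add two_pos, Real.rpow_sub (by linarith), Real.rpow_sub (by linarith)]
        field_simp

lemma wnorm_comp_le {a b : ℝ}
    (h : ProductExponents q δ pA δA pB δB s) (hq : 1 < q) {P : ℕ+ → 𝓗 →L[ℂ] 𝓗}
    (hP : ProjFamily P) {A B : 𝓗 →L[ℂ] 𝓗} (ha : ∀ m n, wnorm P pA δA A m n ≤ a)
    (hb : ∀ m n, wnorm P pB δB B m n ≤ b) (m n : ℕ+) :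
    wnorm P q δ (A.comp B) m n ≤ 2 ^ (s + q + 1) * (1 + 2 * rzeta q) * a * b := by
  set F : ℕ+ → ℝ := fun l => (jap (((m : ℕ) : ℝ) - ((l : ℕ) : ℝ)) ^ q)⁻¹ +
    (jap (((l : ℕ) : ℝ) - ((n : ℕ) : ℝ)) ^ q)⁻¹
  have hswap : (fun l : ℕ+ => (jap (((l : ℕ) : ℝ) - ((n : ℕ) : ℝ)) ^ q)⁻¹) =
      fun l : ℕ+ => (jap (((n : ℕ) : ℝ) - ((l : ℕ) : ℝ)) ^ q)⁻¹ :=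
    funext fun l => by rw [jap_sub_comm]
  have hsm := summable_jap_sub_rpow_inv hq m
  have hsn : Summable fun l : ℕ+ => (jap (((l : ℕ) : ℝ) - ((n : ℕ) : ℝ)) ^ q)⁻¹ :=
    hswap ▸ summable_jap_sub_rpow_inv hq n
  have hF0 (l : ℕ+) : 0 ≤ F l :=
    add_nonneg (inv_nonneg.2 (Real.rpow_nonneg (jap_pos _).le _))
      (inv_nonneg.2 (Real.rpow_nonneg (jap_pos _).le _))
  have hFs : Summable F := hsm.add hsn
  have hFle : ∑' l, F l ≤ 2 * (1 + 2 * rzeta q) := by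
    rw [hsm.tsum_add hsn, hswap]
    linarith [tsum_jap_sub_rpow_inv_le hq m, tsum_jap_sub_rpow_inv_le hq n]
  set g : ℕ+ → ℝ := fun l => ‖(P m).comp (A.comp (P l))‖ * ‖(P l).comp (B.comp (P n))‖
  have ha0 : 0 ≤ a := (wnorm_nonneg P pA δA A 1 1).trans (ha 1 1)
  have hb0 : 0 ≤ b := (wnorm_nonneg P pB δB B 1 1).trans (hb 1 1)
  set C := 2 ^ (s + q) * a * b
  have hC : 0 ≤ C := by positivity
  have hg (l : ℕ+) : weight q δ m n * g l ≤ C * F l :=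
    calc weight q δ m n * g l
        ≤ 2 ^ (s + q) * F l * (weight pA δA m l * weight pB δB l n) * g l := by
          gcongr
          exact h.weight_le (by linarith) m n l
      _ = 2 ^ (s + q) * F l * (wnorm P pA δA A m l * wnorm P pB δB B l n) := by
          simp only [g, wnorm_eq_weight_mul]; ring
      _ ≤ 2 ^ (s + q) * F l * (a * b) :=
          mul_le_mul_of_nonneg_left (mul_le_mul (ha m l) (hb l n) (wnorm_nonneg ..) ha0)
            (mul_nonneg (by positivity) (hF0 l))
      _ = C * F l := by ring
  have hgs : Summable g := by
    refine (hFs.mul_left C |>.div_const (weight q δ m n)).of_nonneg_of_le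
      (fun l => by positivity) fun l => ?_
    rw [le_div_iff₀ (weight_pos q δ m n), mul_comm]
    exact hg l
  calc wnorm P q δ (A.comp B) m n = weight q δ m n * ‖(P m).comp ((A.comp B).comp (P n))‖ := rfl
    _ ≤ weight q δ m n * ∑' l, g l := by
        gcongr
        exacts [(weight_pos q δ m n).le, hP.norm_comp_le_tsum A B m n hgs]
    _ = ∑' l, weight q δ m n * g l := tsum_mul_left.symm
    _ ≤ ∑' l, C * F l := (hgs.mul_left _).tsum_le_tsum hg (hFs.mul_left C)
    _ = C * ∑' l, F l := tsum_mul_left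
    _ ≤ C * (2 * (1 + 2 * rzeta q)) := by gcongr
    _ = 2 ^ (s + q + 1) * (1 + 2 * rzeta q) * a * b := by
        rw [Real.rpow_add_one two_ne_zero]; ring

end ProductExponents

/-- Corollary 2.3: three product estimates for the classes `𝒴`,
with constant `C_p = 2^{p+1}(1+2ζ(p-1))`, in both orders of the factors. -/
theorem statement8
    (P : ℕ+ → 𝓗 →L[ℂ] 𝓗) (hP : ProjFamily P)
    (p : ℝ) (hp : 2 < p) (k : ℕ) (hk : 1 ≤ k) (γ : ℝ) (hγ0 : 0 < γ) (hγh : γ < 1 / 2)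
    (A B : 𝓗 →L[ℂ] 𝓗) :
    (∀ a b : ℝ,
      (∀ m n : ℕ+, wnorm P p ((k : ℝ) * γ) A m n ≤ a) →
      (∀ m n : ℕ+, wnorm P p ((k : ℝ) * γ) B m n ≤ b) →
      ∀ m n : ℕ+,
        wnorm P (p - 1) (((k : ℝ) + 1) * γ) (A.comp B) m n ≤ Cconst p * a * b ∧
        wnorm P (p - 1) (((k : ℝ) + 1) * γ) (B.comp A) m n ≤ Cconst p * a * b) ∧
    (∀ a b : ℝ,
      (∀ m n : ℕ+, wnorm P p (((k : ℝ) - 1) * γ) A m n ≤ a) →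
      (∀ m n : ℕ+, wnorm P (p - 1) ((k : ℝ) * γ) B m n ≤ b) →
      ∀ m n : ℕ+,
        wnorm P (p - 1) ((k : ℝ) * γ) (A.comp B) m n ≤ Cconst p * a * b ∧
        wnorm P (p - 1) ((k : ℝ) * γ) (B.comp A) m n ≤ Cconst p * a * b) ∧
    (∀ a b : ℝ,
      (∀ m n : ℕ+, wnorm P (p + 1) (((k : ℝ) - 1) * γ) A m n ≤ a) →
      (∀ m n : ℕ+, wnorm P (p - 1) (((k : ℝ) + 1) * γ) B m n ≤ b) →
      ∀ m n : ℕ+,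
        wnorm P (p - 1) (((k : ℝ) + 1) * γ) (A.comp B) m n ≤ 2 * Cconst p * a * b ∧
        wnorm P (p - 1) (((k : ℝ) + 1) * γ) (B.comp A) m n ≤ 2 * Cconst p * a * b) := by
  have hq : 1 < p - 1 := by linarith
  have hk' : (1 : ℝ) ≤ k := by exact_mod_cast hk
  have h₁ : ProductExponents (p - 1) ((k + 1) * γ) p (k * γ) p (k * γ) 1 := by
    constructor <;> nlinarith
  have h₂ : ProductExponents (p - 1) (k * γ) p ((k - 1) * γ) (p - 1) (k * γ) 1 := by
    constructor <;> nlinarith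
  have h₃ : ProductExponents (p - 1) ((k + 1) * γ) (p + 1) ((k - 1) * γ) (p - 1) ((k + 1) * γ)
      2 := by
    constructor <;> nlinarith
  have hC₁ : 2 ^ (1 + (p - 1) + 1) * (1 + 2 * rzeta (p - 1)) = Cconst p := by
    rw [Cconst]; ring_nf
  have hC₂ : 2 ^ (2 + (p - 1) + 1) * (1 + 2 * rzeta (p - 1)) = 2 * Cconst p := by
    rw [Cconst, show 2 + (p - 1) + 1 = p + 1 + 1 by ring, Real.rpow_add_one two_ne_zero]; ring
  refine ⟨fun a b ha hb m n => ⟨?_, ?_⟩, fun a b ha hb m n => ⟨?_, ?_⟩,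
    fun a b ha hb m n => ⟨?_, ?_⟩⟩
  · exact (h₁.wnorm_comp_le hq hP ha hb m n).trans_eq (by rw [hC₁])
  · exact (h₁.wnorm_comp_le hq hP hb ha m n).trans_eq (by rw [hC₁]; ring)
  · exact (h₂.wnorm_comp_le hq hP ha hb m n).trans_eq (by rw [hC₁])
  · exact (h₂.swap.wnorm_comp_le hq hP hb ha m n).trans_eq (by rw [hC₁]; ring)
  · exact (h₃.wnorm_comp_le hq hP ha hb m n).trans_eq (by rw [hC₂])
  · exact (h₃.swap.wnorm_comp_le hq hP hb ha m n).trans_eq (by rw [hC₂]; ring)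

end
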